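/- arXiv:2204.01472 — 3 statements merged into one kernel-verified Lean document; each statement's English description precedes it below -/
import Mathlib

section
/- Let R(t) solve Ṙ = −αR + αΨ(t)Ψ(t)ᵀ with R(0) = R₀ ⪰ 0 symmetric, α > 0. Suppose the persistent excitation condition ∫_t^{t+T} Ψ(τ)Ψ(τ)ᵀ dτ ⪰ δ·I holds for all t ≥ 0 with constants T, δ > 0. Then R(t) ⪰ δ α e^{−2αT} I for all t ≥ T. -/
/-!
Multiplying by the integrating factor `e^{ατ}` turns the equation into
`d/dτ (e^{ατ} R) = α e^{ατ} Ψ Ψᵀ`, whose right-hand side is positive semidefinite.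
Hence `R(s) ⪰ 0` for `s ≥ 0`, and
`e^{αt} R(t) ⪰ e^{α(t-T)} R(t-T) + α e^{α(t-T)} ∫_{t-T}^t Ψ Ψᵀ ⪰ α δ e^{α(t-T)} I`, i.e.
`R(t) ⪰ α δ e^{-αT} I`, which is stronger than the claimed bound. The Loewner inequalities are
checked on the quadratic forms `x ↦ xᵀ R(t) x`, which satisfy the scalar version of the equation;
symmetry of `R(t)` follows from the same integrating factor applied to `R(t)ᵀ - R(t)`.
-/

open Matrix intervalIntegral

attribute [local instance] Matrix.frobeniusNormedAddCommGroup Matrix.frobeniusNormedSpace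

open Real Set

section VariationOfConstants

variable {E : Type*} [NormedAddCommGroup E] [NormedSpace ℝ E] [CompleteSpace E]

theorem exp_smul_sub_exp_smul_eq_integral {R P : ℝ → E} {α s t : ℝ} (hst : s ≤ t)
    (hR : ∀ τ ∈ Icc s t, HasDerivAt R (-α • R τ + α • P τ) τ) (hP : Continuous P) :
    exp (α * t) • R t - exp (α * s) • R s = ∫ τ in s..t, (α * exp (α * τ)) • P τ := by
  symm
  apply integral_eq_sub_of_hasDerivAt (fun τ hτ => ?_)
  · exact (by fun_prop : Continuous _).intervalIntegrable s t
  rw [uIcc_of_le hst] at hτ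
  have hexp : HasDerivAt (fun σ => exp (α * σ)) (α * exp (α * τ)) τ := by
    simpa [mul_comm] using ((hasDerivAt_id τ).const_mul α).exp
  refine (hexp.smul (hR τ hτ)).congr_deriv ?_
  module

end VariationOfConstants

theorem le_of_hasDerivAt_of_le_integral {f g : ℝ → ℝ} {α c s t : ℝ} (hα : 0 ≤ α)
    (hg : Continuous g) (hg0 : ∀ τ, 0 ≤ g τ) (hf0 : 0 ≤ f 0)
    (hf : ∀ τ, 0 ≤ τ → HasDerivAt f (-α * f τ + α * g τ) τ)
    (hs : 0 ≤ s) (hst : s ≤ t) (hc : c ≤ ∫ τ in s..t, g τ) :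
    α * c * exp (-(α * (t - s))) ≤ f t := by
  have hvoc : ∀ a b, 0 ≤ a → a ≤ b →
      exp (α * b) * f b - exp (α * a) * f a = ∫ τ in a..b, α * exp (α * τ) * g τ :=
    fun a b ha hab => exp_smul_sub_exp_smul_eq_integral hab (fun τ hτ => hf τ (ha.trans hτ.1)) hg
  have hfs : 0 ≤ exp (α * s) * f s := by
    have h := hvoc 0 s le_rfl hs
    have : 0 ≤ ∫ τ in (0 : ℝ)..s, α * exp (α * τ) * g τ :=
      integral_nonneg hs fun τ _ => by have := hg0 τ; positivity
    simp only [mul_zero, exp_zero, one_mul] at h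
    linarith
  have hgrowth : α * exp (α * s) * c ≤ ∫ τ in s..t, α * exp (α * τ) * g τ := by
    calc α * exp (α * s) * c ≤ α * exp (α * s) * ∫ τ in s..t, g τ := by gcongr
      _ = ∫ τ in s..t, α * exp (α * s) * g τ := (integral_const_mul _ _).symm
      _ ≤ ∫ τ in s..t, α * exp (α * τ) * g τ := by
        refine integral_mono_on hst ((by fun_prop : Continuous _).intervalIntegrable _ _)
          ((by fun_prop : Continuous _).intervalIntegrable _ _) fun τ hτ => ?_
        have := hg0 τ
        gcongr
        exact hτ.1
  have hft : α * exp (α * s) * c ≤ exp (α * t) * f t := by linarith [hvoc s t hs hst]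
  calc α * c * exp (-(α * (t - s))) = exp (-(α * t)) * (α * exp (α * s) * c) := by
        rw [mul_sub, neg_sub, sub_eq_add_neg, exp_add]; ring
    _ ≤ exp (-(α * t)) * (exp (α * t) * f t) := by gcongr
    _ = f t := by rw [← mul_assoc, ← exp_add, neg_add_cancel, exp_zero, one_mul]

namespace Matrix

variable {ι : Type*} [Fintype ι]

theorem isHermitian_of_hasDerivAt {R P : ℝ → Matrix ι ι ℝ} {α t : ℝ}
    (hR0 : (R 0).IsHermitian) (hP : ∀ τ, (P τ).IsHermitian)
    (hR : ∀ τ, 0 ≤ τ → HasDerivAt R (-α • R τ + α • P τ) τ) (ht : 0 ≤ t) :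
    (R t).IsHermitian := by
  set D : ℝ → Matrix ι ι ℝ := fun τ => star (R τ) - R τ
  have hD : ∀ τ ∈ Icc 0 t, HasDerivAt D (-α • D τ + α • (0 : Matrix ι ι ℝ)) τ := by
    intro τ hτ
    refine ((hR τ hτ.1).star.sub (hR τ hτ.1)).congr_deriv ?_
    simp only [D, star_add, star_smul, star_trivial, (hP τ).star_eq]
    module
  have hDt := exp_smul_sub_exp_smul_eq_integral (P := fun _ => 0) ht hD continuous_const
  have hD0 : D 0 = 0 := sub_eq_zero.mpr hR0.star_eq
  exact (by simpa [hD0, (exp_pos _).ne', D, sub_eq_zero] using hDt : star (R t) = R t)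

theorem posSemidef_sub_smul_one_iff [DecidableEq ι] {A : Matrix ι ι ℝ} {c : ℝ} :
    (A - c • 1).PosSemidef ↔ A.IsHermitian ∧ ∀ x, c * (x ⬝ᵥ x) ≤ x ⬝ᵥ A *ᵥ x := by
  have hc : (c • 1 : Matrix ι ι ℝ).IsHermitian := isHermitian_one.smul (IsSelfAdjoint.all c)
  rw [posSemidef_iff_dotProduct_mulVec]
  refine and_congr ⟨fun h => by simpa using h.add hc, fun h => h.sub hc⟩
    (forall_congr' fun x => ?_)
  simp [sub_mulVec, smul_mulVec, dotProduct_sub, dotProduct_smul]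

noncomputable def quadFormCLM (x : ι → ℝ) : Matrix ι ι ℝ →L[ℝ] ℝ :=
  LinearMap.toContinuousLinearMap
    { toFun := fun M => x ⬝ᵥ M *ᵥ x
      map_add' := fun M N => by simp [add_mulVec, dotProduct_add]
      map_smul' := fun c M => by simp [smul_mulVec, dotProduct_smul] }

@[simp] theorem quadFormCLM_apply (x : ι → ℝ) (M : Matrix ι ι ℝ) :
    quadFormCLM x M = x ⬝ᵥ M *ᵥ x := rfl

end Matrix

/-- If `Ṙ = −αR + αΨΨᵀ` with `R(0) = R₀ ⪰ 0` symmetric, `α > 0`, and the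
persistent excitation condition `∫_t^{t+T} ΨΨᵀ ⪰ δI` holds for all `t ≥ 0`, then
`R(t) ⪰ δ α e^{−2αT} I` for all `t ≥ T`. -/
theorem stmt1 {n m : ℕ} (R : ℝ → Matrix (Fin n) (Fin n) ℝ)
    (Ψ : ℝ → Matrix (Fin n) (Fin m) ℝ) (α T δ : ℝ)
    (hα : 0 < α) (hT : 0 < T) (hδ : 0 < δ)
    (hΨ : Continuous Ψ)
    (hR0 : (R 0).PosSemidef)
    (hode : ∀ t, 0 ≤ t → HasDerivAt R (-α • R t + α • (Ψ t * (Ψ t)ᵀ)) t)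
    (hPE : ∀ t, 0 ≤ t →
      ((∫ τ in t..(t + T), Ψ τ * (Ψ τ)ᵀ) - δ • (1 : Matrix (Fin n) (Fin n) ℝ)).PosSemidef) :
    ∀ t, T ≤ t →
      (R t - (δ * α * Real.exp (-2 * α * T)) • (1 : Matrix (Fin n) (Fin n) ℝ)).PosSemidef := by
  intro t ht
  set P : ℝ → Matrix (Fin n) (Fin n) ℝ := fun τ => Ψ τ * (Ψ τ)ᵀ
  have hP : ∀ τ, (P τ).PosSemidef := fun τ => by
    simpa using posSemidef_self_mul_conjTranspose (Ψ τ)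
  have hPcont : Continuous P := hΨ.matrix_mul hΨ.matrix_transpose
  refine posSemidef_sub_smul_one_iff.mpr
    ⟨isHermitian_of_hasDerivAt hR0.1 (fun τ => (hP τ).1) hode (hT.le.trans ht), fun x => ?_⟩
  have hPEx : δ * (x ⬝ᵥ x) ≤ ∫ τ in (t - T)..t, x ⬝ᵥ P τ *ᵥ x := by
    have := (posSemidef_sub_smul_one_iff.mp (hPE (t - T) (by linarith))).2 x
    rw [sub_add_cancel] at this
    exact this.trans_eq
      ((quadFormCLM x).intervalIntegral_comp_comm (hPcont.intervalIntegrable _ _)).symm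
  have hbound := le_of_hasDerivAt_of_le_integral (f := fun τ => x ⬝ᵥ R τ *ᵥ x) hα.le
    ((quadFormCLM x).continuous.comp hPcont)
    (fun τ => by simpa using (hP τ).dotProduct_mulVec_nonneg x)
    (by simpa using hR0.dotProduct_mulVec_nonneg x)
    (fun τ hτ => ((quadFormCLM x).hasFDerivAt.comp_hasDerivAt τ (hode τ hτ)).congr_deriv <| by
      change x ⬝ᵥ (-α • R τ + α • P τ) *ᵥ x = _
      simp [add_mulVec, neg_mulVec, smul_mulVec, dotProduct_add, dotProduct_smul])
    (by linarith) (by linarith) hPEx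
  rw [sub_sub_cancel] at hbound
  have hx : 0 ≤ x ⬝ᵥ x := by simpa using dotProduct_star_self_nonneg x
  calc δ * α * exp (-2 * α * T) * (x ⬝ᵥ x) = α * (δ * (x ⬝ᵥ x)) * exp (-2 * α * T) := by ring
    _ ≤ α * (δ * (x ⬝ᵥ x)) * exp (-(α * T)) := by gcongr; nlinarith
    _ ≤ x ⬝ᵥ R t *ᵥ x := hbound
end

section
/- Let V : [0,∞) → ℝ be a nonnegative absolutely continuous function satisfying V̇(t) ≤ c(t)·V(t) for a locally integrable function c. Suppose there exist T > 0 and κ > 0 such that ∫_t^{t+T} c(τ) dτ ≤ −κ for all t ≥ 0. Then V(t) → 0 exponentially fast: V(t) ≤ C·e^{−(κ/(2T))t}·V(0) for a suitable constant C depending on bounds of c. -/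
/-!
Where `V > 0`, `log V` has right derivative `V̇ / V ≤ c`, so `V b ≤ V a · exp (∫_a^b c)`.
This Grönwall bound survives zeros of `V`: were `V b > 0` with a last zero `z < b`, the bound on
`[s, b]` for `s ↓ z` would give `V b ≤ V z · exp (∫_z^b c) = 0`. Over `[0, t]` the integral of `c`
is at most `-κ` on each of the `⌊t / T⌋` full windows and at most `max c̄ 0 · T` on the remainder,
hence at most `κ + max c̄ 0 · T - (κ / T) t`.
-/

open Set Filter Topology MeasureTheory

section Gronwall

variable {V V' c : ℝ → ℝ} {a b : ℝ}

theorem le_mul_exp_integral_of_pos (hab : a ≤ b) (hcont : ContinuousOn V (Icc a b))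
    (hderiv : ∀ t ∈ Ioo a b, HasDerivWithinAt V (V' t) (Ioi t) t)
    (hle : ∀ t ∈ Ioo a b, V' t ≤ c t * V t) (hc : IntervalIntegrable c volume a b)
    (hpos : ∀ t ∈ Icc a b, 0 < V t) :
    V b ≤ V a * Real.exp (∫ s in a..b, c s) := by
  have ha := hpos a (left_mem_Icc.2 hab)
  have hb := hpos b (right_mem_Icc.2 hab)
  have hlog : Real.log (V b) - Real.log (V a) ≤ ∫ s in a..b, c s := by
    refine intervalIntegral.sub_le_integral_of_hasDeriv_right_of_le hab
      (hcont.log fun t ht => (hpos t ht).ne')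
      (fun t ht => (hderiv t ht).log (hpos t (Ioo_subset_Icc_self ht)).ne')
      ((intervalIntegrable_iff_integrableOn_Icc_of_le hab).1 hc) fun t ht => ?_
    rw [div_le_iff₀ (hpos t (Ioo_subset_Icc_self ht))]
    exact hle t ht
  calc V b = V a * Real.exp (Real.log (V b) - Real.log (V a)) := by
        rw [Real.exp_sub, Real.exp_log hb, Real.exp_log ha]; field_simp
    _ ≤ V a * Real.exp (∫ s in a..b, c s) := by gcongr

theorem le_mul_exp_integral_of_deriv_le_mul (hab : a ≤ b) (hcont : ContinuousOn V (Icc a b))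
    (hderiv : ∀ t ∈ Ioo a b, HasDerivWithinAt V (V' t) (Ioi t) t)
    (hle : ∀ t ∈ Ioo a b, V' t ≤ c t * V t) (hc : IntervalIntegrable c volume a b)
    (hnonneg : ∀ t ∈ Icc a b, 0 ≤ V t) :
    V b ≤ V a * Real.exp (∫ s in a..b, c s) := by
  rcases (hnonneg b (right_mem_Icc.2 hab)).eq_or_lt with hb | hb
  · rw [← hb]
    exact mul_nonneg (hnonneg a (left_mem_Icc.2 hab)) (Real.exp_pos _).le
  set Z := {s ∈ Icc a b | V s = 0}
  rcases Z.eq_empty_or_nonempty with hZ | hZ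
  · refine le_mul_exp_integral_of_pos hab hcont hderiv hle hc fun t ht => ?_
    exact (hnonneg t ht).lt_of_ne' fun h => hZ.subset ⟨ht, h⟩
  exfalso
  have hZclosed : IsClosed Z := hcont.preimage_isClosed_of_isClosed isClosed_Icc isClosed_singleton
  have hZbdd : BddAbove Z := ⟨b, fun s hs => hs.1.2⟩
  set z := sSup Z
  obtain ⟨⟨haz, hzb⟩, hVz⟩ : z ∈ Z := hZclosed.csSup_mem hZ hZbdd
  have hzb : z < b := hzb.lt_of_ne fun h => hb.ne' (h ▸ hVz)
  have hsub : ∀ {s}, z ≤ s → Icc s b ⊆ Icc a b := fun hs => Icc_subset_Icc (haz.trans hs) le_rfl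
  have hbound : ∀ s ∈ Ioc z b, V b ≤ V s * Real.exp (∫ u in s..b, c u) := by
    intro s ⟨hzs, hsb⟩
    refine le_mul_exp_integral_of_pos hsb (hcont.mono (hsub hzs.le))
      (fun t ht => hderiv t (Ioo_subset_Ioo_left (haz.trans hzs.le) ht))
      (fun t ht => hle t (Ioo_subset_Ioo_left (haz.trans hzs.le) ht))
      (hc.mono_set (by simpa [uIcc_of_le, hsb, hab] using hsub hzs.le)) fun t ht => ?_
    exact (hnonneg t (hsub hzs.le ht)).lt_of_ne' fun h =>
      (hzs.trans_le ht.1).not_ge (le_csSup hZbdd ⟨hsub hzs.le ht, h⟩)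
  have hcont_bound : ContinuousOn (fun s => V s * Real.exp (∫ u in s..b, c u)) (Icc z b) := by
    refine (hcont.mono (hsub le_rfl)).mul (ContinuousOn.rexp ?_)
    rw [← uIcc_of_le hzb.le]
    refine intervalIntegral.continuousOn_primitive_interval_left ?_
    rw [uIcc_of_le hzb.le]
    exact ((intervalIntegrable_iff_integrableOn_Icc_of_le hab).1 hc).mono_set (hsub le_rfl)
  have := left_nhdsWithin_Ioc_neBot hzb
  have hlim : V b ≤ V z * Real.exp (∫ u in z..b, c u) :=
    ge_of_tendsto ((hcont_bound z (left_mem_Icc.2 hzb.le)).mono Ioc_subset_Icc_self)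
      (eventually_nhdsWithin_of_forall hbound)
  rw [hVz, zero_mul] at hlim
  exact hb.not_ge hlim

end Gronwall

section Windows

variable {c : ℝ → ℝ} {T κ : ℝ}

theorem integral_le_neg_mul_of_window {a : ℝ} (hc : ∀ x y : ℝ, IntervalIntegrable c volume x y)
    (hT : 0 ≤ T) (hwin : ∀ t, a ≤ t → ∫ τ in t..(t + T), c τ ≤ -κ) (n : ℕ) :
    ∫ s in a..(a + n * T), c s ≤ -(n * κ) := by
  induction n with
  | zero => simp
  | succ n ih =>
    have hsplit := intervalIntegral.integral_add_adjacent_intervals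
      (hc a (a + n * T)) (hc (a + n * T) (a + n * T + T))
    have hlast := hwin (a + n * T) (le_add_of_nonneg_right (by positivity))
    rw [show a + ((n + 1 : ℕ) : ℝ) * T = a + n * T + T by push_cast; ring, ← hsplit]
    push_cast
    linarith

theorem integral_le_of_window {cbar : ℝ} (hT : 0 < T) (hκ : 0 ≤ κ)
    (hc : ∀ x y : ℝ, IntervalIntegrable c volume x y) (hcbd : ∀ t, 0 ≤ t → c t ≤ cbar)
    (hwin : ∀ t, 0 ≤ t → ∫ τ in t..(t + T), c τ ≤ -κ) {t : ℝ} (ht : 0 ≤ t) :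
    ∫ s in 0..t, c s ≤ κ + max cbar 0 * T - κ / T * t := by
  set n := ⌊t / T⌋₊
  have hnt : n * T ≤ t := (le_div_iff₀ hT).1 (Nat.floor_le (by positivity))
  have htn : t < (n + 1) * T := (div_lt_iff₀ hT).1 (Nat.lt_floor_add_one _)
  have hwindows : ∫ s in 0..(n * T), c s ≤ -(n * κ) := by
    simpa using integral_le_neg_mul_of_window hc hT.le hwin n
  have htail : ∫ s in (n * T)..t, c s ≤ max cbar 0 * T := by
    calc ∫ s in (n * T)..t, c s ≤ ∫ _ in (n * T)..t, cbar :=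
          intervalIntegral.integral_mono_on hnt (hc _ _) intervalIntegrable_const
            fun s hs => hcbd s ((by positivity : (0 : ℝ) ≤ n * T).trans hs.1)
      _ = cbar * (t - n * T) := by simp [mul_comm]
      _ ≤ max cbar 0 * T := by gcongr <;> [exact le_max_left _ _; linarith]
  have hcount : -(n * κ) ≤ κ - κ / T * t := by
    have : κ / T * t ≤ (n + 1) * κ := by
      rw [div_mul_eq_mul_div, div_le_iff₀ hT]; nlinarith
    linarith
  rw [← intervalIntegral.integral_add_adjacent_intervals (hc 0 (n * T)) (hc (n * T) t)]
  linarith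

end Windows

/-- If `V ≥ 0` is differentiable with `V̇ ≤ c(t)V(t)` for a locally integrable
function `c` bounded above, and `∫_t^{t+T} c ≤ −κ` over every window of length `T > 0`,
then `V(t) ≤ C e^{−(κ/(2T))t} V(0)` for a suitable constant `C`. -/
theorem stmt8 (V c : ℝ → ℝ) (T κ cbar : ℝ) (hT : 0 < T) (hκ : 0 < κ)
    (hVnonneg : ∀ t, 0 ≤ t → 0 ≤ V t)
    (hVdiff : ∀ t, 0 ≤ t → HasDerivAt V (deriv V t) t)
    (hder : ∀ t, 0 ≤ t → deriv V t ≤ c t * V t)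
    (hcint : ∀ a b : ℝ, IntervalIntegrable c MeasureTheory.volume a b)
    (hcbd : ∀ t, 0 ≤ t → c t ≤ cbar)
    (hwin : ∀ t, 0 ≤ t → (∫ τ in t..(t + T), c τ) ≤ -κ) :
    ∃ C > 0, ∀ t, 0 ≤ t → V t ≤ C * Real.exp (-(κ / (2 * T)) * t) * V 0 := by
  refine ⟨Real.exp (κ + max cbar 0 * T), Real.exp_pos _, fun t ht => ?_⟩
  have hgronwall : V t ≤ V 0 * Real.exp (∫ s in 0..t, c s) :=
    le_mul_exp_integral_of_deriv_le_mul ht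
      (fun s hs => (hVdiff s hs.1).continuousAt.continuousWithinAt)
      (fun s hs => (hVdiff s hs.1.le).hasDerivWithinAt) (fun s hs => hder s hs.1.le)
      (hcint 0 t) fun s hs => hVnonneg s hs.1
  have hintegral := integral_le_of_window hT hκ.le hcint hcbd hwin ht
  have hrate : κ / (2 * T) * t ≤ κ / T * t := by gcongr; linarith
  calc V t ≤ V 0 * Real.exp (∫ s in 0..t, c s) := hgronwall
    _ ≤ V 0 * Real.exp (κ + max cbar 0 * T + -(κ / (2 * T)) * t) := by
        gcongr
        · exact hVnonneg 0 le_rfl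
        · linarith
    _ = Real.exp (κ + max cbar 0 * T) * Real.exp (-(κ / (2 * T)) * t) * V 0 := by
        rw [Real.exp_add]; ring
end

section
/- Consider the scalar ODE ṗ = αp − αp²ψ(t)² with α > 0, p(0) > 0, ψ continuous and bounded. Then p(t) > 0 for all t ≥ 0, and if ∫_t^{t+T} ψ(τ)² dτ ≥ δ > 0 for all t ≥ 0, then p(t) ≤ (δα e^{−2αT})⁻¹ for all t ≥ T. -/
/-!
Writing the equation as `ṗ = (α - α p ψ²) p`, the integrating factor gives
`p t = p 0 · exp ∫₀ᵗ (α - α p ψ²)`, so `p` stays positive. Then `r = 1 / p` solves the linear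
equation `ṙ = -α r + α ψ²`, and variation of constants over `[t - T, t]` together with
`r (t - T) > 0` gives `r t ≥ α e^{-αT} ∫_{t-T}^t ψ² ≥ α δ e^{-αT}`.
-/

open Real Set MeasureTheory intervalIntegral

theorem eq_mul_exp_integral_of_hasDerivAt {p a : ℝ → ℝ} {t₀ t : ℝ} (ha : Continuous a)
    (hp : ∀ s, t₀ ≤ s → HasDerivAt p (a s * p s) s) (ht : t₀ ≤ t) :
    p t = p t₀ * exp (∫ s in t₀..t, a s) := by
  set g : ℝ → ℝ := fun s => p s * exp (-∫ τ in t₀..s, a τ)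
  have hg : ∀ s, t₀ ≤ s → HasDerivAt g 0 s := fun s hs => by
    have hA := (ha.integral_hasStrictDerivAt t₀ s).hasDerivAt
    refine ((hp s hs).mul hA.neg.exp).congr_deriv ?_
    simp only [Pi.neg_apply]
    ring
  have hconst : g t = g t₀ :=
    constant_of_has_deriv_right_zero (fun s hs => (hg s hs.1).continuousAt.continuousWithinAt)
      (fun s hs => (hg s hs.1).hasDerivWithinAt) t ⟨ht, le_rfl⟩
  simp only [g, integral_same, neg_zero, exp_zero, mul_one] at hconst
  rw [← hconst, mul_assoc, ← exp_add, neg_add_cancel, exp_zero, mul_one]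

theorem integral_mul_exp_eq_of_hasDerivAt {r u : ℝ → ℝ} {α a b : ℝ}
    (hr : ∀ s ∈ uIcc a b, HasDerivAt r (-α * r s + u s) s) (hu : IntervalIntegrable u volume a b) :
    ∫ s in a..b, u s * exp (α * s) = r b * exp (α * b) - r a * exp (α * a) := by
  refine integral_eq_sub_of_hasDerivAt (f := fun s => r s * exp (α * s)) (fun s hs => ?_)
    (hu.mul_continuousOn (by fun_prop : Continuous fun s => exp (α * s)).continuousOn)
  refine ((hr s hs).mul (((hasDerivAt_id' s).const_mul α).exp)).congr_deriv ?_
  ring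

theorem exp_mul_integral_le_integral_mul_exp {u : ℝ → ℝ} {α a b : ℝ} (hα : 0 ≤ α) (hab : a ≤ b)
    (hu : IntervalIntegrable u volume a b) (hu₀ : ∀ s ∈ Icc a b, 0 ≤ u s) :
    exp (α * a) * ∫ s in a..b, u s ≤ ∫ s in a..b, u s * exp (α * s) := by
  rw [← intervalIntegral.integral_const_mul]
  refine integral_mono_on hab (hu.const_mul _)
    (hu.mul_continuousOn (by fun_prop : Continuous fun s => exp (α * s)).continuousOn)
    (fun s hs => ?_)
  rw [mul_comm]
  gcongr
  exacts [hu₀ s hs, hs.1]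

theorem exp_neg_mul_integral_le_of_hasDerivAt {r u : ℝ → ℝ} {α a b : ℝ} (hα : 0 ≤ α)
    (hab : a ≤ b) (hr : ∀ s ∈ Icc a b, HasDerivAt r (-α * r s + u s) s) (hra : 0 ≤ r a)
    (hu : IntervalIntegrable u volume a b) (hu₀ : ∀ s ∈ Icc a b, 0 ≤ u s) :
    exp (-α * (b - a)) * ∫ s in a..b, u s ≤ r b := by
  rw [← uIcc_of_le hab] at hr
  have hvar := integral_mul_exp_eq_of_hasDerivAt hr hu
  have hlow := exp_mul_integral_le_integral_mul_exp hα hab hu hu₀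
  have hdrop : 0 ≤ r a * exp (α * a) := by positivity
  have hexp : exp (-α * (b - a)) = exp (α * a) / exp (α * b) := by rw [← exp_sub]; ring_nf
  rw [hexp, div_mul_eq_mul_div, div_le_iff₀ (exp_pos _)]
  linarith

theorem stmt11_general (p ψ : ℝ → ℝ) (α T δ : ℝ)
    (hα : 0 < α) (hT : 0 < T) (hδ : 0 < δ)
    (hψc : Continuous ψ)
    (hp0 : 0 < p 0)
    (hode : ∀ t, 0 ≤ t → HasDerivAt p (α * p t - α * (p t) ^ 2 * (ψ t) ^ 2) t)
    (hPE : ∀ t, 0 ≤ t → δ ≤ ∫ τ in t..(t + T), (ψ τ) ^ 2) :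
    (∀ t, 0 ≤ t → 0 < p t) ∧
    (∀ t, T ≤ t → p t ≤ (δ * α * Real.exp (-2 * α * T))⁻¹) := by
  -- `p` is only known on `[0, ∞)`; freezing it at `p 0` to the left gives a continuous coefficient.
  have hq : Continuous fun s => p (max s 0) :=
    ContinuousOn.comp_continuous (s := Ici 0)
      (fun s hs => (hode s hs).continuousAt.continuousWithinAt) (by fun_prop) (by simp)
  have hpos : ∀ t, 0 ≤ t → 0 < p t := fun t ht => by
    have hlin : ∀ s, 0 ≤ s → HasDerivAt p ((α - α * p (max s 0) * ψ s ^ 2) * p s) s :=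
      fun s hs => (hode s hs).congr_deriv (by rw [max_eq_left hs]; ring)
    rw [eq_mul_exp_integral_of_hasDerivAt
      (continuous_const.sub ((continuous_const.mul hq).mul (hψc.pow 2))) hlin ht]
    positivity
  refine ⟨hpos, fun t ht => ?_⟩
  have htT : 0 ≤ t - T := by linarith
  have hr : ∀ s ∈ Icc (t - T) t,
      HasDerivAt (fun s => (p s)⁻¹) (-α * (p s)⁻¹ + α * ψ s ^ 2) s := fun s hs => by
    have hps := (hpos s (htT.trans hs.1)).ne'
    refine ((hode s (htT.trans hs.1)).inv hps).congr_deriv ?_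
    field_simp
    ring
  have hbound := exp_neg_mul_integral_le_of_hasDerivAt hα.le (by linarith) hr
    (inv_nonneg.2 (hpos _ htT).le)
    ((by fun_prop : Continuous fun s => α * ψ s ^ 2).intervalIntegrable _ _)
    (fun s _ => by positivity)
  have hexcite : α * δ ≤ ∫ s in (t - T)..t, α * ψ s ^ 2 := by
    rw [intervalIntegral.integral_const_mul]
    simpa only [sub_add_cancel] using mul_le_mul_of_nonneg_left (hPE (t - T) htT) hα.le
  calc p t = ((p t)⁻¹)⁻¹ := (inv_inv _).symm
    _ ≤ (δ * α * exp (-α * T))⁻¹ := by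
        refine inv_anti₀ (by positivity) (le_trans ?_ hbound)
        rw [sub_sub_cancel, mul_comm δ, mul_comm]
        exact mul_le_mul_of_nonneg_left hexcite (exp_pos _).le
    _ ≤ (δ * α * exp (-2 * α * T))⁻¹ := by
        refine inv_anti₀ (by positivity) ?_
        gcongr
        nlinarith

/-- For the scalar ODE `ṗ = αp − αp²ψ(t)²` with `α > 0`, `p(0) > 0`, `ψ`
continuous and bounded, `p(t) > 0` for all `t ≥ 0`; and if `∫_t^{t+T} ψ² ≥ δ > 0` for all
`t ≥ 0`, then `p(t) ≤ (δ α e^{−2αT})⁻¹` for all `t ≥ T`. -/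
theorem stmt11 (p ψ : ℝ → ℝ) (α T δ ψbar : ℝ)
    (hα : 0 < α) (hT : 0 < T) (hδ : 0 < δ)
    (hψc : Continuous ψ) (hψb : ∀ t, |ψ t| ≤ ψbar)
    (hp0 : 0 < p 0)
    (hode : ∀ t, 0 ≤ t → HasDerivAt p (α * p t - α * (p t) ^ 2 * (ψ t) ^ 2) t)
    (hPE : ∀ t, 0 ≤ t → δ ≤ ∫ τ in t..(t + T), (ψ τ) ^ 2) :
    (∀ t, 0 ≤ t → 0 < p t) ∧
    (∀ t, T ≤ t → p t ≤ (δ * α * Real.exp (-2 * α * T))⁻¹) :=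
  stmt11_general p ψ α T δ hα hT hδ hψc hp0 hode hPE
end
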